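/- arXiv:1911.00586 — 13 statements merged into one kernel-verified Lean document; each statement's English description precedes it below -/
import Mathlib

section
/- If b is a bitonic sequence of length n over a totally ordered set, and y is obtained from b by applying a splitter (i.e., y_i = max(b_i, b_{i+n/2}) and y_{i+n/2} = min(b_i, b_{i+n/2}) for 1 ≤ i ≤ n/2, with n even), then the first half of y and the second half of y are each bitonic, and every element of the first half of y is ≥ every element of the second half of y. -/
/-- A sequence `b` of length `n` (0-based entries `b 0, ..., b (n-1)`) is bitonic if it is a
circular shift (by `s`) of a sequence that first increases up to a peak `i` and then
decreases. -/
def BitonicSeq {α : Type*} [LinearOrder α] (n : ℕ) (b : ℕ → α) : Prop :=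
  ∃ s i, i < n ∧
    (∀ p q, p ≤ q → q ≤ i → b ((p + s) % n) ≤ b ((q + s) % n)) ∧
    (∀ p q, i ≤ p → p ≤ q → q < n → b ((q + s) % n) ≤ b ((p + s) % n))



section Helpers
variable {α : Type*} [LinearOrder α]

lemma chainUp (f : ℕ → α) (t : ℕ) (h : ∀ j, j + 1 < t → f j ≤ f (j + 1)) :
    ∀ q p, p ≤ q → q < t → f p ≤ f q := by
  intro q
  induction q with
  | zero => intro p hp _; simp [Nat.le_zero.mp hp]
  | succ q ih =>
    intro p hpq hq
    rcases Nat.eq_or_lt_of_le hpq with h1 | h1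
    · exact le_of_eq (by rw [h1])
    · exact (ih p (Nat.lt_succ_iff.mp h1) (by omega)).trans (h q hq)

lemma chainDown (f : ℕ → α) (t m : ℕ) (h : ∀ j, t ≤ j → j + 1 < m → f (j + 1) ≤ f j) :
    ∀ q p, t ≤ p → p ≤ q → q < m → f q ≤ f p := by
  intro q
  induction q with
  | zero => intro p _ hp _; simp [show p = 0 by omega]
  | succ q ih =>
    intro p ht hpq hq
    rcases Nat.eq_or_lt_of_le hpq with h1 | h1
    · exact le_of_eq (by rw [h1])
    · exact (h q (by omega) hq).trans (ih p ht (by omega) (by omega))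

lemma master (m : ℕ) (hm : 0 < m) (y Z : ℕ → α) (s k t : ℕ) (ht : t ≤ m)
    (hZ : ∀ p, y ((p + s) % m) = Z p)
    (hup : ∀ j, j + 1 < t → Z (j + k) ≤ Z (j + 1 + k))
    (hdown : ∀ j, t ≤ j → j + 1 < m → Z (j + 1 + k) ≤ Z (j + k)) :
    BitonicSeq m y := by
  have hy : ∀ p, y ((p + (s + k)) % m) = Z (p + k) := by
    intro p
    rw [show p + (s + k) = p + k + s by omega]
    exact hZ (p + k)
  have cu := chainUp (fun j => Z (j + k)) t (fun j hj => hup j hj)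
  have cd := chainDown (fun j => Z (j + k)) t m (fun j h1 h2 => hdown j h1 h2)
  rcases Nat.eq_zero_or_pos t with ht0 | htpos
  · refine ⟨s + k, 0, hm, ?_, ?_⟩
    · intro p q hpq hq
      have h : p = 0 ∧ q = 0 := by omega
      rw [h.1, h.2]
    · intro p q _ hpq hq
      rw [hy p, hy q]
      exact cd q p (by omega) hpq hq
  rcases eq_or_lt_of_le ht with htm | htm
  · refine ⟨s + k, m - 1, by omega, ?_, ?_⟩
    · intro p q hpq hq
      rw [hy p, hy q]
      exact cu q p hpq (by omega)
    · intro p q h1 hpq hq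
      have h : p = m - 1 ∧ q = m - 1 := by omega
      rw [h.1, h.2]
  · by_cases hj : Z (t - 1 + k) ≤ Z (t + k)
    · refine ⟨s + k, t, htm, ?_, ?_⟩
      · intro p q hpq hq
        rw [hy p, hy q]
        rcases eq_or_lt_of_le hq with h1 | h1
        · rcases eq_or_lt_of_le hpq with h2 | h2
          · exact le_of_eq (by rw [h2])
          · calc Z (p + k) ≤ Z (t - 1 + k) := cu (t - 1) p (by omega) (by omega)
              _ ≤ Z (t + k) := hj
              _ = Z (q + k) := by rw [h1]
        · exact cu q p hpq h1
      · intro p q h1 hpq hq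
        rw [hy p, hy q]
        exact cd q p h1 hpq hq
    · push_neg at hj
      refine ⟨s + k, t - 1, by omega, ?_, ?_⟩
      · intro p q hpq hq
        rw [hy p, hy q]
        exact cu q p hpq (by omega)
      · intro p q h1 hpq hq
        rw [hy p, hy q]
        rcases Nat.lt_or_ge p t with h2 | h2
        · have hp : p = t - 1 := by omega
          rcases Nat.lt_or_ge q t with h3 | h3
          · have hq' : q = t - 1 := by omega
            rw [hq', hp]
          · exact (cd q t le_rfl h3 hq).trans (hj.le.trans (le_of_eq (by rw [hp])))
        · exact cd q p h2 hpq hq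

lemma core (m i : ℕ) (hm : 0 < m) (hi : i < 2 * m) (c : ℕ → α)
    (cper : ∀ j, c (j + 2 * m) = c j)
    (cup : ∀ p q, p ≤ q → q ≤ i → c p ≤ c q)
    (cdn : ∀ p q, i ≤ p → p ≤ q → q < 2 * m → c q ≤ c p)
    (y : ℕ → α) (s : ℕ)
    (hZ : ∀ p, y ((p + s) % m) = max (c p) (c (p + m)))
    (hW : ∀ p, y ((p + s) % m + m) = min (c p) (c (p + m))) :
    BitonicSeq m y ∧ BitonicSeq m (fun j => y (j + m)) ∧
      (∀ p, p < m → ∀ q, q < m → y (q + m) ≤ y p) := by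
  have interior : ∀ u v w, u ≤ v → v ≤ w → w < 2 * m → min (c u) (c w) ≤ c v := by
    intro u v w h1 h2 h3
    rcases le_or_gt v i with h | h
    · exact (min_le_left _ _).trans (cup u v h1 h)
    · exact (min_le_right _ _).trans (cdn v w h.le h2 h3)
  have surj : ∀ p, p < m → ∃ u, u < m ∧ (u + s) % m = p := by
    intro p hp
    refine ⟨(p + (m * s - s)) % m, Nat.mod_lt _ hm, ?_⟩
    have hle : s ≤ m * s := Nat.le_mul_of_pos_left s hm
    rw [Nat.mod_add_mod, show p + (m * s - s) + s = p + m * s by omega,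
      Nat.add_mul_mod_self_left, Nat.mod_eq_of_lt hp]
  have dom : ∀ p, p < m → ∀ q, q < m → y (q + m) ≤ y p := by
    intro p hp q hq
    obtain ⟨u, hum, hu⟩ := surj p hp
    obtain ⟨v, hvm, hv⟩ := surj q hq
    have e1 : y p = max (c u) (c (u + m)) := by rw [← hu]; exact hZ u
    have e2 : y (q + m) = min (c v) (c (v + m)) := by rw [← hv]; exact hW v
    rw [e1, e2]
    rcases le_total u v with h | h
    · exact (interior v (u + m) (v + m) (by omega) (by omega) (by omega)).trans
        (le_max_right _ _)
    · exact (interior v u (v + m) h (by omega) (by omega)).trans (le_max_left _ _)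
  have main : BitonicSeq m y ∧ BitonicSeq m (fun j => y (j + m)) := by
    rcases Nat.lt_or_ge i m with him | him
    · -- case 1 : i < m
      have hex : ∃ j, c (j + m) ≤ c j ∨ i < j := ⟨i + 1, Or.inr (by omega)⟩
      have hki : Nat.find hex ≤ i + 1 := Nat.find_le (Or.inr (by omega))
      set k := Nat.find hex with hkdef
      have hNQ : ∀ j, j < k → c j < c (j + m) := by
        intro j hj
        have h := Nat.find_min hex hj
        push_neg at h
        exact h.1
      have hQ : ∀ j, k ≤ j → j ≤ i → c (j + m) ≤ c j := by
        intro j h1 h2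
        have hQk : c (k + m) ≤ c k := by
          rcases Nat.find_spec hex with h | h
          · exact h
          · omega
        calc c (j + m) ≤ c (k + m) := cdn (k + m) (j + m) (by omega) (by omega) (by omega)
          _ ≤ c k := hQk
          _ ≤ c j := cup k j h1 h2
      constructor
      · apply master m hm y (fun p => max (c p) (c (p + m))) s k (i + 1 - k) (by omega) hZ
        · intro j hj
          show max (c (j + k)) (c (j + k + m)) ≤ max (c (j + 1 + k)) (c (j + 1 + k + m))
          rw [max_eq_left (hQ (j + k) (by omega) (by omega)),
            max_eq_left (hQ (j + 1 + k) (by omega) (by omega))]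
          exact cup (j + k) (j + 1 + k) (by omega) (by omega)
        · intro j hjt hjm
          show max (c (j + 1 + k)) (c (j + 1 + k + m)) ≤ max (c (j + k)) (c (j + k + m))
          have ha : i + 1 ≤ j + k := by omega
          rcases lt_trichotomy (j + k + 1) m with h1 | h1 | h1
          · exact max_le_max (cdn (j + k) (j + 1 + k) (by omega) (by omega) (by omega))
              (cdn (j + k + m) (j + 1 + k + m) (by omega) (by omega) (by omega))
          · have e1 : c (j + 1 + k) = c m := by congr 1; omega
            have e2 : c (j + 1 + k + m) = c 0 := by
              rw [show j + 1 + k + m = 0 + 2 * m by omega]; exact cper 0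
            have e3 : c (j + k) = c (m - 1) := by congr 1; omega
            rw [e1, e2, e3]
            have hk0 : 0 < k := by omega
            have h0 : c 0 ≤ c m := by
              have := (hNQ 0 hk0).le
              rwa [Nat.zero_add] at this
            have hmm : c m ≤ c (m - 1) := cdn (m - 1) m (by omega) (by omega) (by omega)
            exact max_le (hmm.trans (le_max_left _ _))
              ((h0.trans hmm).trans (le_max_left _ _))
          · have e1 : c (j + k) = c (j + k - m + m) := by congr 1; omega
            have e2 : c (j + k + m) = c (j + k - m) := by
              rw [show j + k + m = j + k - m + 2 * m by omega]; exact cper _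
            have e3 : c (j + 1 + k) = c (j + k - m + 1 + m) := by congr 1; omega
            have e4 : c (j + 1 + k + m) = c (j + k - m + 1) := by
              rw [show j + 1 + k + m = j + k - m + 1 + 2 * m by omega]; exact cper _
            rw [e1, e2, e3, e4]
            have h5 : j + k - m + 1 < k := by omega
            refine max_le ((cdn (j + k - m + m) (j + k - m + 1 + m) (by omega) (by omega)
              (by omega)).trans (le_max_left _ _)) ?_
            exact ((hNQ (j + k - m + 1) h5).le.trans (cdn (j + k - m + m) (j + k - m + 1 + m)
              (by omega) (by omega) (by omega))).trans (le_max_left _ _)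
      · apply master m hm (fun j => y (j + m)) (fun p => min (c p) (c (p + m))) s 0 k
          (by omega) (fun p => hW p)
        · intro j hj
          show min (c (j + 0)) (c (j + 0 + m)) ≤ min (c (j + 1 + 0)) (c (j + 1 + 0 + m))
          simp only [Nat.add_zero]
          rw [min_eq_left (hNQ (j + 1) hj).le]
          exact (min_le_left _ _).trans (cup j (j + 1) (by omega) (by omega))
        · intro j h1 h2
          show min (c (j + 1 + 0)) (c (j + 1 + 0 + m)) ≤ min (c (j + 0)) (c (j + 0 + m))
          simp only [Nat.add_zero]
          rcases Nat.lt_or_ge j i with hji | hji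
          · rw [min_eq_right (hQ j h1 (by omega)), min_eq_right (hQ (j + 1) (by omega) (by omega))]
            exact cdn (j + m) (j + 1 + m) (by omega) (by omega) (by omega)
          · exact min_le_min (cdn j (j + 1) (by omega) (by omega) (by omega))
              (cdn (j + m) (j + 1 + m) (by omega) (by omega) (by omega))
    · -- case 2 : m ≤ i
      have hex : ∃ j, (i - m < j ∧ c (j + m) ≤ c j) ∨ j = m := ⟨m, Or.inr rfl⟩
      have hkm : Nat.find hex ≤ m := Nat.find_le (Or.inr rfl)
      set k := Nat.find hex with hkdef
      have hki : i - m < k := by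
        rcases Nat.find_spec hex with h | h
        · exact h.1
        · omega
      have hNQ : ∀ j, i - m < j → j < k → c j < c (j + m) := by
        intro j h1 h2
        have h := Nat.find_min hex h2
        push_neg at h
        exact h.1 h1
      have hQ : ∀ j, k ≤ j → j < m → c (j + m) ≤ c j := by
        intro j h1 h2
        have hQk : c (k + m) ≤ c k := by
          rcases Nat.find_spec hex with h | h
          · exact h.2
          · omega
        calc c (j + m) ≤ c (k + m) := cdn (k + m) (j + m) (by omega) (by omega) (by omega)
          _ ≤ c k := hQk
          _ ≤ c j := cup k j h1 (by omega)
      constructor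
      · apply master m hm y (fun p => max (c p) (c (p + m))) s k (m - k + (i - m) + 1)
          (by omega) hZ
        · intro j hj
          show max (c (j + k)) (c (j + k + m)) ≤ max (c (j + 1 + k)) (c (j + 1 + k + m))
          have ha : j + k + 1 ≤ i := by omega
          rcases lt_trichotomy (j + k + 1) m with h1 | h1 | h1
          · rw [max_eq_left (hQ (j + k) (by omega) (by omega)),
              max_eq_left (hQ (j + 1 + k) (by omega) (by omega))]
            exact cup (j + k) (j + 1 + k) (by omega) (by omega)
          · have e1 : c (j + 1 + k) = c m := by congr 1; omega
            have e2 : c (j + 1 + k + m) = c 0 := by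
              rw [show j + 1 + k + m = 0 + 2 * m by omega]; exact cper 0
            rw [e1, e2, max_eq_left (hQ (j + k) (by omega) (by omega))]
            exact (cup (j + k) m (by omega) (by omega)).trans (le_max_left _ _)
          · have e1 : c (j + k) = c (j + k - m + m) := by congr 1; omega
            have e2 : c (j + k + m) = c (j + k - m) := by
              rw [show j + k + m = j + k - m + 2 * m by omega]; exact cper _
            have e3 : c (j + 1 + k) = c (j + k - m + 1 + m) := by congr 1; omega
            have e4 : c (j + 1 + k + m) = c (j + k - m + 1) := by
              rw [show j + 1 + k + m = j + k - m + 1 + 2 * m by omega]; exact cper _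
            rw [e1, e2, e3, e4]
            exact max_le ((cup (j + k - m + m) (j + k - m + 1 + m) (by omega)
                (by omega)).trans (le_max_left _ _))
              ((cup (j + k - m) (j + k - m + 1) (by omega) (by omega)).trans (le_max_right _ _))
        · intro j h1 h2
          show max (c (j + 1 + k)) (c (j + 1 + k + m)) ≤ max (c (j + k)) (c (j + k + m))
          have ha : m + (i - m) + 1 ≤ j + k := by omega
          have e1 : c (j + k) = c (j + k - m + m) := by congr 1; omega
          have e2 : c (j + k + m) = c (j + k - m) := by
            rw [show j + k + m = j + k - m + 2 * m by omega]; exact cper _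
          have e3 : c (j + 1 + k) = c (j + k - m + 1 + m) := by congr 1; omega
          have e4 : c (j + 1 + k + m) = c (j + k - m + 1) := by
            rw [show j + 1 + k + m = j + k - m + 1 + 2 * m by omega]; exact cper _
          rw [e1, e2, e3, e4]
          have h5 : j + k - m + 1 < k := by omega
          refine max_le ((cdn (j + k - m + m) (j + k - m + 1 + m) (by omega) (by omega)
            (by omega)).trans (le_max_left _ _)) ?_
          exact ((hNQ (j + k - m + 1) (by omega) h5).le.trans (cdn (j + k - m + m)
            (j + k - m + 1 + m) (by omega) (by omega) (by omega))).trans (le_max_left _ _)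
      · apply master m hm (fun j => y (j + m)) (fun p => min (c p) (c (p + m))) s 0 k hkm
          (fun p => hW p)
        · intro j hj
          show min (c (j + 0)) (c (j + 0 + m)) ≤ min (c (j + 1 + 0)) (c (j + 1 + 0 + m))
          simp only [Nat.add_zero]
          rcases Nat.lt_or_ge j (i - m) with h1 | h1
          · exact min_le_min (cup j (j + 1) (by omega) (by omega))
              (cup (j + m) (j + 1 + m) (by omega) (by omega))
          · rw [min_eq_left (hNQ (j + 1) (by omega) hj).le]
            exact (min_le_left _ _).trans (cup j (j + 1) (by omega) (by omega))
        · intro j h1 h2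
          show min (c (j + 1 + 0)) (c (j + 1 + 0 + m)) ≤ min (c (j + 0)) (c (j + 0 + m))
          simp only [Nat.add_zero]
          rw [min_eq_right (hQ j h1 (by omega)), min_eq_right (hQ (j + 1) (by omega) h2)]
          exact cdn (j + m) (j + 1 + m) (by omega) (by omega) (by omega)
  exact ⟨main.1, main.2, dom⟩

end Helpers

/-- Applying a splitter to a bitonic sequence yields two bitonic halves, the first half
dominating the second. -/
theorem stmt0 {α : Type*} [LinearOrder α] (n : ℕ) (hpos : 0 < n) (heven : 2 ∣ n)
    (b y : ℕ → α) (hb : BitonicSeq n b)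
    (hy1 : ∀ i, i < n / 2 → y i = max (b i) (b (i + n / 2)))
    (hy2 : ∀ i, i < n / 2 → y (i + n / 2) = min (b i) (b (i + n / 2))) :
    BitonicSeq (n / 2) y ∧ BitonicSeq (n / 2) (fun i => y (i + n / 2)) ∧
    (∀ p, p < n / 2 → ∀ q, q < n / 2 → y (q + n / 2) ≤ y p) := by
  obtain ⟨m, hnm⟩ := heven
  have hm : 0 < m := by omega
  have hn2 : n / 2 = m := by omega
  rw [hn2] at hy1 hy2 ⊢
  obtain ⟨s, i, hin, hup, hdn⟩ := hb
  have cper : ∀ j, b ((j + 2 * m + s) % n) = b ((j + s) % n) := by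
    intro j
    rw [show j + 2 * m + s = j + s + n by omega, Nat.add_mod_right]
  have pair : ∀ j : ℕ, y ((j + s) % m) = max (b ((j + s) % n)) (b ((j + m + s) % n)) ∧
      y ((j + s) % m + m) = min (b ((j + s) % n)) (b ((j + m + s) % n)) := by
    intro j
    have htm : (j + s) % m < m := Nat.mod_lt _ hm
    have hrn : (j + s) % n < n := Nat.mod_lt _ (by omega)
    have hrm : (j + s) % n % m = (j + s) % m := Nat.mod_mod_of_dvd _ ⟨2, by omega⟩
    have hq2 : (j + m + s) % n = ((j + s) % n + m) % n := by
      rw [show j + m + s = j + s + m by omega, Nat.add_mod (j + s) m n,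
        Nat.mod_eq_of_lt (show m < n by omega)]
    have hcase : (j + s) % n = (j + s) % m ∨ (j + s) % n = (j + s) % m + m := by
      rcases Nat.lt_or_ge ((j + s) % n) m with h | h
      · left; rw [← hrm, Nat.mod_eq_of_lt h]
      · right
        have h2 : (j + s) % n % m = (j + s) % n - m := by
          rw [Nat.mod_eq_sub_mod h, Nat.mod_eq_of_lt (by omega)]
        omega
    rcases hcase with h | h
    · have h2 : ((j + s) % n + m) % n = (j + s) % m + m := by
        rw [h, Nat.mod_eq_of_lt (by omega)]
      rw [hq2, h2, h]
      exact ⟨hy1 _ htm, hy2 _ htm⟩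
    · have h2 : ((j + s) % n + m) % n = (j + s) % m := by
        rw [h, show (j + s) % m + m + m = (j + s) % m + n by omega, Nat.add_mod_right,
          Nat.mod_eq_of_lt (by omega)]
      rw [hq2, h2, h, max_comm, min_comm]
      exact ⟨hy1 _ htm, hy2 _ htm⟩
  exact core m i hm (by omega) (fun j => b ((j + s) % n)) cper hup
    (fun p q h1 h2 h3 => hdn p q h1 h2 (by omega)) y s
    (fun j => (pair j).1) (fun j => (pair j).2)
end

section
/- If a sequence b = ⟨b_1,...,b_k⟩ is v-shaped and s-dominating, then either b is non-increasing, or there exists an index i with k/2 < i < k such that b_i < b_{i+1}. -/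
/-- `b` (of length `k`, 0-based) is v-shaped: non-increasing up to some index `i`, then
non-decreasing from `i` to the end. -/
def VShaped {α : Type*} [LinearOrder α] (k : ℕ) (b : ℕ → α) : Prop :=
  ∃ i, i < k ∧ (∀ p q, p ≤ q → q ≤ i → b q ≤ b p) ∧
    (∀ p q, i ≤ p → p ≤ q → q < k → b p ≤ b q)

/-- `b` (of length `k`, 0-based) is s-dominating: `b j ≥ b (k-1-j)` for `j < k/2`. -/
def SDominating {α : Type*} [LinearOrder α] (k : ℕ) (b : ℕ → α) : Prop :=
  ∀ j, j < k / 2 → b (k - 1 - j) ≤ b j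

/-- A v-shaped, s-dominating sequence is either non-increasing, or has a strict increase
at some position in the second half. -/
theorem stmt2 {α : Type*} [LinearOrder α] (k : ℕ) (hk : 2 ∣ k) (b : ℕ → α)
    (hv : VShaped k b) (hs : SDominating k b) :
    (∀ p q, p ≤ q → q < k → b q ≤ b p) ∨
    (∃ i, k / 2 ≤ i ∧ i + 1 < k ∧ b i < b (i + 1)) := by
  obtain ⟨v, hvk, hdec, hinc⟩ := hv
  by_cases H : ∃ i, k / 2 ≤ i ∧ i + 1 < k ∧ b i < b (i + 1)
  · exact Or.inr H
  push_neg at H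
  left
  obtain ⟨m, rfl⟩ := hk
  have hm : (2 * m) / 2 = m := by omega
  -- the tail (indices ≥ m) is non-increasing
  have tail : ∀ c, c < 2 * m → ∀ a, m ≤ a → a ≤ c → b c ≤ b a := by
    intro c
    induction c with
    | zero =>
      intro _ a _ hac
      have : a = 0 := by omega
      subst this; exact le_refl _
    | succ n ih =>
      intro hc a ha hac
      rcases Nat.lt_or_ge a (n + 1) with h | h
      · have hstep := H n (by omega) (by omega)
        exact le_trans hstep (ih (by omega) a ha (by omega))
      · have : a = n + 1 := by omega
        subst this; exact le_refl _
  intro p q hpq hq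
  rcases le_or_gt q v with hqv | hvq
  · exact hdec p q hpq hqv
  rcases le_or_gt m p with hmp | hpm
  · exact tail q hq p hmp hpq
  · have hj : b (2 * m - 1 - p) ≤ b p := hs p (by omega)
    have h1 : b q ≤ b (2 * m - 1 - p) := by
      rcases le_or_gt q (2 * m - 1 - p) with h | h
      · exact hinc q (2 * m - 1 - p) (by omega) h (by omega)
      · exact tail q hq (2 * m - 1 - p) (by omega) (by omega)
    exact le_trans h1 hj
end

section
/- If b = ⟨b_1,...,b_k⟩ is v-shape s-dominating (k divisible by 4), then the prefix ⟨b_1,...,b_{k/4}⟩ dominates ⟨b_{k/2+1},...,b_{3k/4}⟩, i.e., every element of the first sequence is ≥ every element of the second. -/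
/-- If `b` is v-shape s-dominating (k divisible by 4), then the prefix `⟨b_1,...,b_{k/4}⟩`
dominates `⟨b_{k/2+1},...,b_{3k/4}⟩` (0-based: indices `< k/4` dominate indices in
`[k/2, 3k/4)`). -/
theorem stmt3 {α : Type*} [LinearOrder α] (k : ℕ) (hk : 4 ∣ k) (b : ℕ → α)
    (hv : VShaped k b) (hs : SDominating k b) :
    ∀ p, p < k / 4 → ∀ q, k / 2 ≤ q → q < 3 * k / 4 → b q ≤ b p := by
  obtain ⟨m, rfl⟩ := hk
  intro p hp q hq1 hq2
  obtain ⟨i, hik, hdec, hinc⟩ := hv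
  by_cases h : q ≤ i
  · exact hdec p q (by omega) h
  · exact (hinc q (4 * m - 1 - p) (by omega) (by omega) (by omega)).trans
      (hs p (by omega))
end

section
/- Let b ∈ X^k be v-shape s-dominating (k divisible by 4) and let w be the result of applying a half-splitter to b (i.e., comparing positions ⟨k/4+1, 3k/4+1⟩, ..., ⟨k/2, k⟩, putting the max in the lower-indexed position). Then: (1) the first half of w is v-shape s-dominating; (2) the second half of w is bitonic; (3) every element of the first half of w is ≥ every element of the second half of w. -/
section Aux

variable {α : Type*} [LinearOrder α]

lemma exists_argmin (n : ℕ) (hn : 0 < n) (f : ℕ → α) :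
    ∃ j, j < n ∧ ∀ t, t < n → f j ≤ f t := by
  obtain ⟨j, hj, h⟩ := Finset.exists_min_image (Finset.range n) f ⟨0, Finset.mem_range.2 hn⟩
  exact ⟨j, Finset.mem_range.1 hj, fun t ht => h t (Finset.mem_range.2 ht)⟩

lemma exists_argmax (n : ℕ) (hn : 0 < n) (f : ℕ → α) :
    ∃ j, j < n ∧ ∀ t, t < n → f t ≤ f j := by
  obtain ⟨j, hj, h⟩ := Finset.exists_max_image (Finset.range n) f ⟨0, Finset.mem_range.2 hn⟩
  exact ⟨j, Finset.mem_range.1 hj, fun t ht => h t (Finset.mem_range.2 ht)⟩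

lemma vshaped_of_max (n : ℕ) (hn : 0 < n) (h : ℕ → α)
    (H : ∀ p q r, p ≤ q → q ≤ r → r < n → h q ≤ max (h p) (h r)) : VShaped n h := by
  obtain ⟨j, hj, hmin⟩ := exists_argmin n hn h
  refine ⟨j, hj, ?_, ?_⟩
  · intro p q hpq hqj
    rcases le_max_iff.1 (H p q j hpq hqj hj) with h1 | h1
    · exact h1
    · exact le_trans h1 (hmin p (by omega))
  · intro p q hjp hpq hq
    rcases le_max_iff.1 (H j p q hjp hpq hq) with h1 | h1
    · exact le_trans h1 (hmin q hq)
    · exact h1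

lemma bitonic_of_dom (n s : ℕ) (hn : 0 < n) (d : ℕ → α)
    (h : ∀ y, y < n →
      (∀ x, x ≤ y → d ((x + s) % n) ≤ d ((y + s) % n)) ∨
      (∀ z, y ≤ z → z < n → d ((z + s) % n) ≤ d ((y + s) % n))) :
    BitonicSeq n d := by
  obtain ⟨j, hj, hmax⟩ := exists_argmax n hn (fun t => d ((t + s) % n))
  refine ⟨s, j, hj, ?_, ?_⟩
  · intro p q hpq hqj
    rcases h q (by omega) with hl | hr
    · exact hl p hpq
    · exact le_trans (hmax p (by omega)) (hr j hqj hj)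
  · intro p q hjp hpq hq
    rcases h p (by omega) with hl | hr
    · exact le_trans (hmax q hq) (hl j hjp)
    · exact hr q hpq hq

end Aux

/-- Applying the half-splitter (comparing positions `j` and `j + k/2` only for
`k/4 ≤ j < k/2`, 0-based) to a v-shape s-dominating sequence `b` yields `w` such that:
(1) the first half of `w` is v-shape s-dominating; (2) the second half of `w` is bitonic;
(3) the first half of `w` dominates the second half. -/
theorem stmt4 {α : Type*} [LinearOrder α] (k : ℕ) (hk : 4 ∣ k) (hk0 : 0 < k)
    (b w : ℕ → α)
    (hv : VShaped k b) (hs : SDominating k b)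
    (hw1 : ∀ j, k / 4 ≤ j → j < k / 2 → w j = max (b j) (b (j + k / 2)))
    (hw2 : ∀ j, k / 4 ≤ j → j < k / 2 → w (j + k / 2) = min (b j) (b (j + k / 2)))
    (hw3 : ∀ j, j < k / 4 → w j = b j ∧ w (j + k / 2) = b (j + k / 2)) :
    (VShaped (k / 2) w ∧ SDominating (k / 2) w) ∧
    BitonicSeq (k / 2) (fun i => w (i + k / 2)) ∧
    (∀ p, p < k / 2 → ∀ q, q < k / 2 → w (q + k / 2) ≤ w p) := by
  obtain ⟨m, rfl⟩ := hk
  have hm : 0 < m := by omega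
  have e4 : 4 * m / 4 = m := by omega
  have e2 : 4 * m / 2 = 2 * m := by omega
  rw [e4, e2] at hw1 hw2 hw3
  rw [e2]
  obtain ⟨i, hik, hdec, hinc⟩ := hv
  have hik' : i < 4 * m := hik
  -- s-dominance in convenient form
  have hsd : ∀ j, j < 2 * m → b (4 * m - 1 - j) ≤ b j := by
    intro j hj
    have := hs j (by omega)
    exact this
  -- window lemma
  have L0 : ∀ j q, j < 2 * m → j ≤ q → q ≤ 4 * m - 1 - j → b q ≤ b j := by
    intro j q hj hjq hq
    rcases le_total q i with h | h
    · exact hdec j q hjq h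
    · exact le_trans (hinc q (4 * m - 1 - j) h (by omega) (by omega)) (hsd j hj)
  -- basic w facts
  have wlb : ∀ t, t < 2 * m → b t ≤ w t := by
    intro t ht
    rcases lt_or_ge t m with h | h
    · rw [(hw3 t h).1]
    · rw [hw1 t h ht]; exact le_max_left _ _
  have wlb2 : ∀ t, m ≤ t → t < 2 * m → b (t + 2 * m) ≤ w t := by
    intro t h ht
    rw [hw1 t h ht]; exact le_max_right _ _
  have hd1 : ∀ t, t < m → w (t + 2 * m) = b (t + 2 * m) := fun t ht => (hw3 t ht).2
  have hd2 : ∀ t, m ≤ t → t < 2 * m → w (t + 2 * m) = min (b t) (b (t + 2 * m)) := hw2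
  refine ⟨⟨?_, ?_⟩, ?_, ?_⟩
  · -- VShaped (2*m) w
    apply vshaped_of_max (2 * m) (by omega)
    intro p q r hpq hqr hr
    rcases lt_or_ge q m with hqm | hqm
    · -- w q = b q
      rw [(hw3 q hqm).1]
      rcases le_total q i with h | h
      · exact le_trans (le_trans (hdec p q hpq h) (wlb p (by omega))) (le_max_left _ _)
      · exact le_trans (le_trans (hinc q r h hqr (by omega)) (wlb r hr)) (le_max_right _ _)
    · rw [hw1 q hqm (by omega)]
      apply max_le
      · rcases le_total q i with h | h
        · exact le_trans (le_trans (hdec p q hpq h) (wlb p (by omega))) (le_max_left _ _)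
        · exact le_trans (le_trans (hinc q r h hqr (by omega)) (wlb r hr)) (le_max_right _ _)
      · rcases le_total (q + 2 * m) i with h | h
        · rcases lt_or_ge p m with hpm | hpm
          · refine le_trans (le_trans (hdec p (q + 2 * m) (by omega) h) ?_) (le_max_left _ _)
            exact wlb p (by omega)
          · refine le_trans (le_trans (hdec (p + 2 * m) (q + 2 * m) (by omega) h) ?_)
              (le_max_left _ _)
            exact wlb2 p hpm (by omega)
        · refine le_trans (le_trans (hinc (q + 2 * m) (r + 2 * m) h (by omega) (by omega)) ?_)
            (le_max_right _ _)
          exact wlb2 r (by omega) hr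
  · -- SDominating (2*m) w
    intro j hj
    have hjm : j < m := by omega
    have h1 : m ≤ 2 * m - 1 - j := by omega
    have h2 : 2 * m - 1 - j < 2 * m := by omega
    rw [(hw3 j hjm).1, hw1 _ h1 h2]
    apply max_le
    · exact L0 j (2 * m - 1 - j) (by omega) (by omega) (by omega)
    · have h3 : 2 * m - 1 - j + 2 * m = 4 * m - 1 - j := by omega
      rw [h3]
      exact hsd j (by omega)
  · -- BitonicSeq (2*m) (fun i => w (i + 2*m))
    rcases le_or_gt i m with hi1 | hi1
    · -- case i ≤ m : second half is constant b i
      have hconst : ∀ q, i ≤ q → q ≤ 4 * m - 1 - i → b q = b i := by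
        intro q h1 h2
        refine le_antisymm ?_ (hinc i q le_rfl h1 (by omega))
        exact le_trans (hinc q (4 * m - 1 - i) h1 h2 (by omega)) (hsd i (by omega))
      have hall : ∀ t, t < 2 * m → w (t + 2 * m) = b i := by
        intro t ht
        rcases lt_or_ge t m with h | h
        · rw [hd1 t h]; exact hconst (t + 2 * m) (by omega) (by omega)
        · rw [hd2 t h ht]
          have h1 : b t = b i := hconst t (by omega) (by omega)
          have h2 : b i ≤ b (t + 2 * m) := hinc i _ le_rfl (by omega) (by omega)
          rw [h1, min_eq_left h2]
      refine ⟨0, 0, by omega, ?_, ?_⟩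
      · intro p q hpq hq0
        have hp : p = 0 := by omega
        have hq : q = 0 := by omega
        subst hp; subst hq; exact le_rfl
      · intro p q h0 hpq hq
        show w ((q + 0) % (2 * m) + 2 * m) ≤ w ((p + 0) % (2 * m) + 2 * m)
        rw [hall ((q + 0) % (2 * m)) (Nat.mod_lt _ (by omega)),
          hall ((p + 0) % (2 * m)) (Nat.mod_lt _ (by omega))]
    · rcases lt_or_ge i (2 * m) with hi2 | hi2
      · -- case m < i < 2m
        have hconst : ∀ q, i ≤ q → q ≤ 4 * m - 1 - i → b q = b i := by
          intro q h1 h2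
          refine le_antisymm ?_ (hinc i q le_rfl h1 (by omega))
          exact le_trans (hinc q (4 * m - 1 - i) h1 h2 (by omega)) (hsd i (by omega))
        have flatB : ∀ u, i ≤ u → u < 2 * m → w (u + 2 * m) = b i := by
          intro u h1 h2
          rw [hd2 u (by omega) h2]
          have e1 : b u = b i := hconst u h1 (by omega)
          have e2 : b i ≤ b (u + 2 * m) := hinc i _ le_rfl (by omega) (by omega)
          rw [e1, min_eq_left e2]
        have flat2 : ∀ v, v < 2 * m - i → w (v + 2 * m) = b i := by
          intro v hv
          rw [hd1 v (by omega)]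
          exact hconst (v + 2 * m) (by omega) (by omega)
        have DOM : ∀ y, y < 2 * m →
            (∀ x, x ≤ y → w ((x + i) % (2 * m) + 2 * m) ≤ w ((y + i) % (2 * m) + 2 * m)) ∨
            (∀ z, y ≤ z → z < 2 * m →
              w ((z + i) % (2 * m) + 2 * m) ≤ w ((y + i) % (2 * m) + 2 * m)) := by
          intro y hy
          rcases lt_or_ge (y + i) (2 * m) with hcase | hcase
          · -- u = y + i ∈ [i, 2m) : flat region, value b i
            left
            intro x hx
            have hu : (y + i) % (2 * m) = y + i := Nat.mod_eq_of_lt hcase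
            have hux : (x + i) % (2 * m) = x + i := Nat.mod_eq_of_lt (by omega)
            rw [hu, hux, flatB (y + i) (by omega) hcase, flatB (x + i) (by omega) (by omega)]
          · have hu : (y + i) % (2 * m) = y + i - 2 * m := by
              rw [Nat.mod_eq_sub_mod hcase]; exact Nat.mod_eq_of_lt (by omega)
            -- helper to compute c x for x ≤ y
            rcases lt_or_ge (y + i - 2 * m) (2 * m - i) with hflat | hnf
            · -- flat region again
              left
              intro x hx
              rw [hu, flat2 (y + i - 2 * m) hflat]
              rcases lt_or_ge (x + i) (2 * m) with h1 | h1
              · rw [Nat.mod_eq_of_lt h1, flatB (x + i) (by omega) h1]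
              · have hux : (x + i) % (2 * m) = x + i - 2 * m := by
                  rw [Nat.mod_eq_sub_mod h1]; exact Nat.mod_eq_of_lt (by omega)
                rw [hux, flat2 (x + i - 2 * m) (by omega)]
            · rcases lt_or_ge (y + i - 2 * m) m with hum | hum
              · -- c y = b (y+i-2m+2m), increasing tail region
                left
                intro x hx
                have hcy : w (y + i - 2 * m + 2 * m) = b (y + i - 2 * m + 2 * m) :=
                  hd1 _ hum
                have hylb : b i ≤ b (y + i - 2 * m + 2 * m) :=
                  hinc i _ le_rfl (by omega) (by omega)
                rw [hu, hcy]
                rcases lt_or_ge (x + i) (2 * m) with h1 | h1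
                · rw [Nat.mod_eq_of_lt h1, flatB (x + i) (by omega) h1]; exact hylb
                · have hux : (x + i) % (2 * m) = x + i - 2 * m := by
                    rw [Nat.mod_eq_sub_mod h1]; exact Nat.mod_eq_of_lt (by omega)
                  rw [hux]
                  rcases lt_or_ge (x + i - 2 * m) (2 * m - i) with h2 | h2
                  · rw [flat2 _ h2]; exact hylb
                  · rw [hd1 _ (by omega)]
                    exact hinc (x + i - 2 * m + 2 * m) (y + i - 2 * m + 2 * m)
                      (by omega) (by omega) (by omega)
              · -- c y = min (b u) (b (u + 2m)) with u = y+i-2m ∈ [m, i)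
                have hui : y + i - 2 * m < i := by omega
                have hcy := hd2 (y + i - 2 * m) hum (by omega)
                rcases le_or_gt (b (y + i - 2 * m + 2 * m)) (b (y + i - 2 * m)) with hab | hab
                · -- value is the increasing part : LEFT-dominance
                  left
                  intro x hx
                  have hcy' : w (y + i - 2 * m + 2 * m) = b (y + i - 2 * m + 2 * m) := by
                    rw [hcy, min_eq_right hab]
                  have hylb : b i ≤ b (y + i - 2 * m + 2 * m) :=
                    hinc i _ le_rfl (by omega) (by omega)
                  rw [hu, hcy']
                  rcases lt_or_ge (x + i) (2 * m) with h1 | h1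
                  · rw [Nat.mod_eq_of_lt h1, flatB (x + i) (by omega) h1]; exact hylb
                  · have hux : (x + i) % (2 * m) = x + i - 2 * m := by
                      rw [Nat.mod_eq_sub_mod h1]; exact Nat.mod_eq_of_lt (by omega)
                    rw [hux]
                    rcases lt_or_ge (x + i - 2 * m) (2 * m - i) with h2 | h2
                    · rw [flat2 _ h2]; exact hylb
                    · rcases lt_or_ge (x + i - 2 * m) m with h3 | h3
                      · rw [hd1 _ h3]
                        exact hinc (x + i - 2 * m + 2 * m) (y + i - 2 * m + 2 * m)
                          (by omega) (by omega) (by omega)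
                      · rw [hd2 _ h3 (by omega)]
                        exact le_trans (min_le_right _ _)
                          (hinc (x + i - 2 * m + 2 * m) (y + i - 2 * m + 2 * m)
                            (by omega) (by omega) (by omega))
                · -- value is b u (decreasing part) : RIGHT-dominance
                  right
                  intro z hz1 hz2
                  have hcy' : w (y + i - 2 * m + 2 * m) = b (y + i - 2 * m) := by
                    rw [hcy, min_eq_left hab.le]
                  have h1 : 2 * m ≤ z + i := by omega
                  have huz : (z + i) % (2 * m) = z + i - 2 * m := by
                    rw [Nat.mod_eq_sub_mod h1]; exact Nat.mod_eq_of_lt (by omega)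
                  rw [hu, hcy', huz, hd2 (z + i - 2 * m) (by omega) (by omega)]
                  exact le_trans (min_le_left _ _)
                    (hdec (y + i - 2 * m) (z + i - 2 * m) (by omega) (by omega))
        exact bitonic_of_dom (2 * m) i (by omega) (fun t => w (t + 2 * m)) DOM
      · -- case 2m ≤ i < 4m, set σ = i - 2m
        have DOM : ∀ y, y < 2 * m →
            (∀ x, x ≤ y →
              w ((x + (i - 2 * m)) % (2 * m) + 2 * m) ≤
                w ((y + (i - 2 * m)) % (2 * m) + 2 * m)) ∨
            (∀ z, y ≤ z → z < 2 * m →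
              w ((z + (i - 2 * m)) % (2 * m) + 2 * m) ≤
                w ((y + (i - 2 * m)) % (2 * m) + 2 * m)) := by
          intro y hy
          rcases lt_or_ge (y + (i - 2 * m)) (2 * m) with hcase | hcase
          · -- u = y + σ ∈ [σ, 2m)
            have hu : (y + (i - 2 * m)) % (2 * m) = y + (i - 2 * m) :=
              Nat.mod_eq_of_lt hcase
            rcases lt_or_ge (y + (i - 2 * m)) m with hum | hum
            · -- c y = b (u + 2m), u + 2m ≥ i : increasing region, LEFT
              left
              intro x hx
              have hux : (x + (i - 2 * m)) % (2 * m) = x + (i - 2 * m) :=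
                Nat.mod_eq_of_lt (by omega)
              rw [hu, hux, hd1 _ hum, hd1 _ (by omega)]
              exact hinc (x + (i - 2 * m) + 2 * m) (y + (i - 2 * m) + 2 * m)
                (by omega) (by omega) (by omega)
            · have hcy := hd2 (y + (i - 2 * m)) hum (by omega)
              rcases le_or_gt (b (y + (i - 2 * m) + 2 * m)) (b (y + (i - 2 * m))) with hab | hab
              · -- LEFT-dominance
                left
                intro x hx
                have hcy' : w (y + (i - 2 * m) + 2 * m) = b (y + (i - 2 * m) + 2 * m) := by
                  rw [hcy, min_eq_right hab]
                have hux : (x + (i - 2 * m)) % (2 * m) = x + (i - 2 * m) :=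
                  Nat.mod_eq_of_lt (by omega)
                rw [hu, hux, hcy']
                rcases lt_or_ge (x + (i - 2 * m)) m with h3 | h3
                · rw [hd1 _ h3]
                  exact hinc (x + (i - 2 * m) + 2 * m) (y + (i - 2 * m) + 2 * m)
                    (by omega) (by omega) (by omega)
                · rw [hd2 _ h3 (by omega)]
                  exact le_trans (min_le_right _ _)
                    (hinc (x + (i - 2 * m) + 2 * m) (y + (i - 2 * m) + 2 * m)
                      (by omega) (by omega) (by omega))
              · -- c y = b u, decreasing part : RIGHT-dominance
                right
                intro z hz1 hz2
                have hcy' : w (y + (i - 2 * m) + 2 * m) = b (y + (i - 2 * m)) := by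
                  rw [hcy, min_eq_left hab.le]
                rw [hu, hcy']
                rcases lt_or_ge (z + (i - 2 * m)) (2 * m) with h1 | h1
                · have huz : (z + (i - 2 * m)) % (2 * m) = z + (i - 2 * m) :=
                    Nat.mod_eq_of_lt h1
                  rw [huz, hd2 _ (by omega) h1]
                  exact le_trans (min_le_left _ _)
                    (hdec (y + (i - 2 * m)) (z + (i - 2 * m)) (by omega) (by omega))
                · have huz : (z + (i - 2 * m)) % (2 * m) = z + (i - 2 * m) - 2 * m := by
                    rw [Nat.mod_eq_sub_mod h1]; exact Nat.mod_eq_of_lt (by omega)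
                  rw [huz]
                  rcases lt_or_ge (z + (i - 2 * m) - 2 * m) m with h3 | h3
                  · rw [hd1 _ h3]
                    exact hdec (y + (i - 2 * m)) (z + (i - 2 * m) - 2 * m + 2 * m)
                      (by omega) (by omega)
                  · rw [hd2 _ h3 (by omega)]
                    exact le_trans (min_le_right _ _)
                      (hdec (y + (i - 2 * m)) (z + (i - 2 * m) - 2 * m + 2 * m)
                        (by omega) (by omega))
          · -- u = y + σ - 2m ∈ [0, σ) : always RIGHT-dominance (decreasing wrap region)
            right
            intro z hz1 hz2
            have hu : (y + (i - 2 * m)) % (2 * m) = y + (i - 2 * m) - 2 * m := by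
              rw [Nat.mod_eq_sub_mod hcase]; exact Nat.mod_eq_of_lt (by omega)
            have h1 : 2 * m ≤ z + (i - 2 * m) := by omega
            have huz : (z + (i - 2 * m)) % (2 * m) = z + (i - 2 * m) - 2 * m := by
              rw [Nat.mod_eq_sub_mod h1]; exact Nat.mod_eq_of_lt (by omega)
            rw [hu, huz]
            have hczle : ∀ v : ℕ, v = z + (i - 2 * m) - 2 * m →
                w (v + 2 * m) ≤ b (z + (i - 2 * m) - 2 * m + 2 * m) := by
              intro v hv
              subst hv
              rcases lt_or_ge (z + (i - 2 * m) - 2 * m) m with h3 | h3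
              · rw [hd1 _ h3]
              · rw [hd2 _ h3 (by omega)]
                exact min_le_right _ _
            rcases lt_or_ge (y + (i - 2 * m) - 2 * m) m with h4 | h4
            · rw [hd1 _ h4]
              refine le_trans (hczle _ rfl) ?_
              exact hdec (y + (i - 2 * m) - 2 * m + 2 * m) (z + (i - 2 * m) - 2 * m + 2 * m)
                (by omega) (by omega)
            · rw [hd2 _ h4 (by omega)]
              refine le_trans (hczle _ rfl) (le_min ?_ ?_)
              · exact hdec (y + (i - 2 * m) - 2 * m) (z + (i - 2 * m) - 2 * m + 2 * m)
                  (by omega) (by omega)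
              · exact hdec (y + (i - 2 * m) - 2 * m + 2 * m) (z + (i - 2 * m) - 2 * m + 2 * m)
                  (by omega) (by omega)
        exact bitonic_of_dom (2 * m) (i - 2 * m) (by omega) (fun t => w (t + 2 * m)) DOM
  · -- first half dominates second half
    intro p hp q hq
    rcases lt_or_ge q m with hqm | hqm
    · rw [(hw3 q hqm).2]
      rcases le_or_gt (p + q) (2 * m - 1) with h1 | h1
      · exact le_trans (L0 p (q + 2 * m) hp (by omega) (by omega)) (wlb p hp)
      · have hpm : m ≤ p := by omega
        rcases le_or_gt i (q + 2 * m) with h2 | h2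
        · exact le_trans (hinc (q + 2 * m) (p + 2 * m) h2 (by omega) (by omega))
            (wlb2 p hpm hp)
        · exact le_trans (hdec p (q + 2 * m) (by omega) (by omega)) (wlb p hp)
    · rw [hw2 q hqm hq]
      rcases le_or_gt p q with h1 | h1
      · exact le_trans (min_le_left _ _) (le_trans (L0 p q hp h1 (by omega)) (wlb p hp))
      · have hpm : m ≤ p := by omega
        rcases le_or_gt i (q + 2 * m) with h2 | h2
        · exact le_trans (min_le_right _ _)
            (le_trans (hinc (q + 2 * m) (p + 2 * m) h2 (by omega) (by omega)) (wlb2 p hpm hp))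
        · exact le_trans (min_le_right _ _)
            (le_trans (hdec p (q + 2 * m) (by omega) (by omega)) (wlb p hp))
end

section
/- If b ∈ X^k is v-shape s-dominating, then applying the half-splitter to b gives the same result as applying the full splitter to b; that is, for each j with 1 ≤ j ≤ k/4, b_j ≥ b_{j+k/2} already holds, so the first k/4 comparators of the splitter have no effect. -/
/-- If `b` is v-shape s-dominating, then for each of the first `k/4` comparator positions of
the splitter (0-based `j < k/4`, comparing `b j` with `b (j + k/2)`), the inequality
`b j ≥ b (j + k/2)` already holds, so these comparators have no effect: the half-splitter
gives the same result as the full splitter. -/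
theorem stmt5 {α : Type*} [LinearOrder α] (k : ℕ) (hk : 4 ∣ k) (b : ℕ → α)
    (hv : VShaped k b) (hs : SDominating k b) :
    ∀ j, j < k / 4 →
      b (j + k / 2) ≤ b j ∧
      max (b j) (b (j + k / 2)) = b j ∧
      min (b j) (b (j + k / 2)) = b (j + k / 2) := by
  intro j hj
  obtain ⟨i, hik, hdec, hinc⟩ := hv
  have key : b (j + k / 2) ≤ b j := by
    rcases le_or_gt i (j + k / 2) with h | h
    · have h1 : b (j + k / 2) ≤ b (k - 1 - j) :=
        hinc _ _ h (by omega) (by omega)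
      exact h1.trans (hs j (by omega))
    · exact hdec j (j + k / 2) (by omega) (by omega)
  exact ⟨key, max_eq_left key, min_eq_right key⟩
end

section
/- Suppose at most k of the input variables of an m-selector of order n are set to 1 (with k ≤ m ≤ n), say input variables x_{π(1)},...,x_{π(k)} for an injective function π. Then unit propagation on the clause set of the selector derives y_1 = 1, y_2 = 1, ..., y_{min(k,m)} = 1. -/
/-- Unit propagation derivability: a literal `(v, b)` (meaning variable `v` gets value `b`)
is derivable from the clause set `F` and the initial partial assignment `A` (given as a set
of literals assumed true) if it is assumed, or if some clause of `F` contains it and all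
other literals of that clause are falsified by derivable literals. -/
inductive UPDeriv {V : Type*} (F : Set (Finset (V × Bool))) (A : Set (V × Bool)) :
    V × Bool → Prop where
  | assm : ∀ {l : V × Bool}, l ∈ A → UPDeriv F A l
  | unit : ∀ {C : Finset (V × Bool)} {l : V × Bool}, C ∈ F → l ∈ C →
      (∀ l' ∈ C, l' ≠ l → UPDeriv F A (l'.1, !l'.2)) → UPDeriv F A l

/-- The clause set of an `m`-selector of order `n`: inputs `x_i = Sum.inl i`, outputs
`y_p = Sum.inr p`; for every subset `S` of inputs of cardinality `p+1 ≤ m`, the clause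
`⋀_{i ∈ S} x_i ⇒ y_{p+1}` (as the clause of negated inputs plus the positive output). -/
def selectorCNF (n m : ℕ) : Set (Finset ((Fin n ⊕ Fin m) × Bool)) :=
  { C | ∃ (S : Finset (Fin n)) (p : Fin m), S.card = (p : ℕ) + 1 ∧
      C = S.image (fun i => ((Sum.inl i : Fin n ⊕ Fin m), false)) ∪
          {((Sum.inr p : Fin n ⊕ Fin m), true)} }

/-- If the `k` input variables `x_{π(1)},...,x_{π(k)}` of an `m`-selector of order `n`
(`k ≤ m ≤ n`, `π` injective) are set to 1, then unit propagation derives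
`y_1 = 1, ..., y_{min(k,m)} = 1`. -/
theorem stmt6 (n m k : ℕ) (hkm : k ≤ m) (hmn : m ≤ n)
    (π : Fin k → Fin n) (hπ : Function.Injective π) :
    ∀ p : Fin m, (p : ℕ) < min k m →
      UPDeriv (selectorCNF n m)
        { l | ∃ j : Fin k, l = ((Sum.inl (π j) : Fin n ⊕ Fin m), true) }
        ((Sum.inr p : Fin n ⊕ Fin m), true) := by
  intro p hp
  have hpk : (p : ℕ) + 1 ≤ k := (lt_min_iff.mp hp).1
  set f : Fin ((p : ℕ) + 1) → Fin n := fun j => π (Fin.castLE hpk j) with hf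
  have hfinj : Function.Injective f := fun a b h => by
    have := hπ h
    exact Fin.castLE_injective hpk this
  set S : Finset (Fin n) := Finset.univ.image f with hS
  have hcard : S.card = (p : ℕ) + 1 := by
    rw [hS, Finset.card_image_of_injective _ hfinj, Finset.card_univ, Fintype.card_fin]
  refine UPDeriv.unit (C := S.image (fun i => ((Sum.inl i : Fin n ⊕ Fin m), false)) ∪
      {((Sum.inr p : Fin n ⊕ Fin m), true)}) ?_ ?_ ?_
  · exact ⟨S, p, hcard, rfl⟩
  · simp
  · intro l' hl' hne
    rcases Finset.mem_union.mp hl' with h | h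
    · rcases Finset.mem_image.mp h with ⟨i, hi, rfl⟩
      rcases Finset.mem_image.mp hi with ⟨j, _, rfl⟩
      exact UPDeriv.assm ⟨Fin.castLE hpk j, rfl⟩
    · simp only [Finset.mem_singleton] at h
      exact absurd h hne
end

section
/- Let s be an m-selector of order n with inputs x_1,...,x_n and outputs y_1,...,y_m. If in a partial assignment the output y_k is fixed to 0 (1 ≤ k ≤ m) and exactly k−1 input variables are set to 1, then unit propagation sets all remaining input variables to 0. -/
/-- In an `m`-selector of order `n`, if the output `y_k` (here `k = (t:ℕ)+1`, `t : Fin m`)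
is fixed to 0 and exactly `k - 1` input variables (given by an injective `π`) are set to 1,
then unit propagation sets all the remaining input variables to 0. -/
theorem stmt7 (n m : ℕ) (t : Fin m)
    (π : Fin (t : ℕ) → Fin n) (hπ : Function.Injective π) :
    ∀ i : Fin n, (∀ j, π j ≠ i) →
      UPDeriv (selectorCNF n m)
        (({((Sum.inr t : Fin n ⊕ Fin m), false)} : Set ((Fin n ⊕ Fin m) × Bool)) ∪
          { l | ∃ j : Fin (t : ℕ), l = ((Sum.inl (π j) : Fin n ⊕ Fin m), true) })
        ((Sum.inl i : Fin n ⊕ Fin m), false) := by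

  intro i hi
  have hiS : i ∉ Finset.univ.image π := by
    simp only [Finset.mem_image]; rintro ⟨j, -, hj⟩; exact hi j hj
  have hcard : (insert i (Finset.univ.image π)).card = (t : ℕ) + 1 := by
    rw [Finset.card_insert_of_notMem hiS,
      Finset.card_image_of_injective _ hπ, Finset.card_univ, Fintype.card_fin]
  refine UPDeriv.unit (C := (insert i (Finset.univ.image π)).image
      (fun i => ((Sum.inl i : Fin n ⊕ Fin m), false)) ∪
      {((Sum.inr t : Fin n ⊕ Fin m), true)}) ⟨_, t, hcard, rfl⟩ ?_ ?_
  · simp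
  · rintro ⟨v, b⟩ hmem hne
    simp only [Finset.mem_union, Finset.mem_image, Finset.mem_insert,
      Finset.mem_singleton, Prod.mk.injEq] at hmem
    rcases hmem with ⟨a, haS, heq1, heq2⟩ | ⟨heq1, heq2⟩
    · subst heq1; subst heq2
      rcases haS with rfl | ha
      · exact absurd rfl hne
      · simp only [Finset.mem_image, Finset.mem_univ, true_and] at ha
        obtain ⟨j, rfl⟩ := ha
        exact UPDeriv.assm (Or.inr ⟨j, rfl⟩)
    · subst heq1; subst heq2
      exact UPDeriv.assm (Or.inl rfl)
end

section
/- Given two sorted (non-increasing) 0-1 sequences x̄ and ȳ with |ȳ| ≤ ⌊k/2⌋, |x̄| ≤ ⌊k/2⌋ + 2, and |ȳ|₁ ≤ |x̄|₁ ≤ |ȳ|₁ + 4 (where |·|₁ counts the number of 1s), define the sequence a of length s = |x̄| + |ȳ| by: for even j = 2i, a_j = max(max(x(i+2), y(i)), min(x(i+1), y(i−1))), and for odd j = 2i−1, a_j = min(max(x(i+1), y(i−1)), min(x(i), y(i−2))), where x(i) = 0 if i > |x̄| else x_i, and y(i) = 1 if i < 1, 0 if i > |ȳ|, else y_i. Then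 a is sorted (non-increasing) and is a permutation of the multiset x̄ :: ȳ. -/
/-!
A sorted 0-1 sequence is determined by its length and its number of ones: with `p` ones among
the `x`'s and `q` among the `y`'s, the padded sequences are `X i = [1 ≤ i ≤ p]` and
`Y i = [i ≤ q]`. Substituting these step functions into the two comparator layers, each output
`a j` becomes `[j ≤ p + q]`, the step function with `p + q` ones; this is a case check on
`i` against `q` and `p`, which closes because `q ≤ p ≤ q + 4`. A step function is sorted, and a
0-1 list is determined up to permutation by its length and its number of ones.
-/

open List

theorem range'_one_succ (n : ℕ) : range' 1 (n + 1) = range' 1 n ++ [n + 1] := by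
  simp [range'_concat, Nat.add_comm]

theorem count_true_map_range'_le (f : ℕ → Bool) (n : ℕ) :
    ((range' 1 n).map f).count true ≤ n := by
  simpa using count_le_length (a := true) (l := (range' 1 n).map f)

theorem eq_decide_le_count_true_of_antitoneOn {f : ℕ → Bool} {n : ℕ}
    (hf : AntitoneOn f (Set.Icc 1 n)) {i : ℕ} (hi : i ∈ Set.Icc 1 n) :
    f i = decide (i ≤ ((range' 1 n).map f).count true) := by
  induction n generalizing i with
  | zero => exact absurd hi (by simp)
  | succ n ih =>
    cases hlast : f (n + 1) with
    | true =>
      have hall : ∀ j ∈ Set.Icc 1 (n + 1), f j = true := fun j hj =>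
        Bool.eq_true_of_true_le (hlast ▸ hf hj ⟨Nat.le_add_left 1 n, le_rfl⟩ hj.2)
      have hcount : ((range' 1 (n + 1)).map f).count true = n + 1 := by
        rw [(count_eq_length (l := (range' 1 (n + 1)).map f)).2, length_map, length_range']
        simp only [mem_map, mem_range'_1]
        rintro _ ⟨j, hj, rfl⟩
        exact (hall j ⟨hj.1, by omega⟩).symm
      simp [hall i hi, hcount, hi.2]
    | false =>
      have hcount : ((range' 1 (n + 1)).map f).count true
          = ((range' 1 n).map f).count true := by
        simp [range'_one_succ, hlast]
      rw [hcount]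
      rcases Nat.lt_or_ge i (n + 1) with hin | hin
      · exact ih (hf.mono (Set.Icc_subset_Icc_right n.le_succ)) ⟨hi.1, by omega⟩
      · have hbound := count_true_map_range'_le f n
        rw [show i = n + 1 from le_antisymm hi.2 hin, hlast]
        exact (decide_eq_false (by omega)).symm

theorem ite_eq_decide_of_antitoneOn {f : ℕ → Bool} {n : ℕ}
    (hf : AntitoneOn f (Set.Icc 1 n)) (i : ℕ) :
    (if 1 ≤ i ∧ i ≤ n then f i else false)
      = decide (1 ≤ i ∧ i ≤ ((range' 1 n).map f).count true) := by
  have := count_true_map_range'_le f n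
  split_ifs with h
  · rw [eq_decide_le_count_true_of_antitoneOn hf h]
    simp [h.1]
  · exact (decide_eq_false (by omega)).symm

theorem ite_ite_eq_decide_of_antitoneOn {f : ℕ → Bool} {n : ℕ}
    (hf : AntitoneOn f (Set.Icc 1 n)) (i : ℕ) :
    (if i < 1 then true else if i ≤ n then f i else false)
      = decide (i ≤ ((range' 1 n).map f).count true) := by
  have := count_true_map_range'_le f n
  split_ifs with h₀ h₁
  · exact (decide_eq_true (by omega)).symm
  · exact eq_decide_le_count_true_of_antitoneOn hf ⟨by omega, h₁⟩
  · exact (decide_eq_false (by omega)).symm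

theorem count_true_map_decide_le (c n : ℕ) :
    ((range' 1 n).map fun j => decide (j ≤ c)).count true = min c n := by
  induction n with
  | zero => simp
  | succ n ih =>
    by_cases h : n + 1 ≤ c <;> simp [range'_one_succ, ih, h] <;> omega

theorem perm_of_count_true_eq {l₁ l₂ : List Bool} (hlen : l₁.length = l₂.length)
    (hcount : l₁.count true = l₂.count true) : l₁.Perm l₂ := by
  refine perm_iff_count.2 fun b => ?_
  cases b
  · have h₁ := count_true_add_count_false l₁
    have h₂ := count_true_add_count_false l₂
    omega
  · exact hcount

section Combine

variable {p q : ℕ} {X Y : ℕ → Bool}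

theorem combine_even_eq (hqp : q ≤ p) (hpq : p ≤ q + 4)
    (hX : ∀ i, X i = decide (1 ≤ i ∧ i ≤ p)) (hY : ∀ i, Y i = decide (i ≤ q)) (i : ℕ) :
    max (max (X (i + 2)) (Y i)) (min (X (i + 1)) (Y (i - 1))) = decide (2 * i ≤ p + q) := by
  simp only [hX, hY, Bool.max_eq_or, Bool.min_eq_and, ← Bool.decide_or, ← Bool.decide_and,
    decide_eq_decide]
  omega

theorem combine_odd_eq (hqp : q ≤ p) (hpq : p ≤ q + 4)
    (hX : ∀ i, X i = decide (1 ≤ i ∧ i ≤ p)) (hY : ∀ i, Y i = decide (i ≤ q))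
    {i : ℕ} (hi : 1 ≤ i) :
    min (max (X (i + 1)) (Y (i - 1))) (min (X i) (Y (i - 2))) = decide (2 * i - 1 ≤ p + q) := by
  simp only [hX, hY, Bool.max_eq_or, Bool.min_eq_and, ← Bool.decide_or, ← Bool.decide_and,
    decide_eq_decide]
  omega

end Combine

theorem stmt10_general (lx ly : ℕ) (x y : ℕ → Bool)
    (hxs : ∀ i j, 1 ≤ i → i ≤ j → j ≤ lx → x j ≤ x i)
    (hys : ∀ i j, 1 ≤ i → i ≤ j → j ≤ ly → y j ≤ y i)
    (hc1 : ((List.range' 1 ly).map y).count true ≤ ((List.range' 1 lx).map x).count true)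
    (hc2 : ((List.range' 1 lx).map x).count true ≤ ((List.range' 1 ly).map y).count true + 4)
    (X Y : ℕ → Bool)
    (hX : ∀ i, X i = if 1 ≤ i ∧ i ≤ lx then x i else false)
    (hY : ∀ i, Y i = if i < 1 then true else if i ≤ ly then y i else false)
    (a : ℕ → Bool)
    (haeven : ∀ i, 1 ≤ i → 2 * i ≤ lx + ly →
      a (2 * i) = max (max (X (i + 2)) (Y i)) (min (X (i + 1)) (Y (i - 1))))
    (haodd : ∀ i, 1 ≤ i → 2 * i - 1 ≤ lx + ly →
      a (2 * i - 1) = min (max (X (i + 1)) (Y (i - 1))) (min (X i) (Y (i - 2)))) :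
    (∀ i j, 1 ≤ i → i ≤ j → j ≤ lx + ly → a j ≤ a i) ∧
    List.Perm ((List.range' 1 (lx + ly)).map a)
      (((List.range' 1 lx).map x) ++ ((List.range' 1 ly).map y)) := by
  set p := ((range' 1 lx).map x).count true
  set q := ((range' 1 ly).map y).count true
  have hXp : ∀ i, X i = decide (1 ≤ i ∧ i ≤ p) := fun i => (hX i).trans <|
    ite_eq_decide_of_antitoneOn (fun i hi j hj hij => hxs i j hi.1 hij hj.2) i
  have hYq : ∀ i, Y i = decide (i ≤ q) := fun i => (hY i).trans <|
    ite_ite_eq_decide_of_antitoneOn (fun i hi j hj hij => hys i j hi.1 hij hj.2) i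
  have ha : ∀ j ∈ Set.Icc 1 (lx + ly), a j = decide (j ≤ p + q) := by
    rintro j ⟨hj₁, hj₂⟩
    rcases Nat.even_or_odd' j with ⟨i, rfl | rfl⟩
    · rw [haeven i (by omega) hj₂, combine_even_eq hc1 hc2 hXp hYq]
    · rw [show 2 * i + 1 = 2 * (i + 1) - 1 by omega] at hj₂ ⊢
      rw [haodd (i + 1) (by omega) hj₂, combine_odd_eq hc1 hc2 hXp hYq (by omega)]
  refine ⟨fun i j hi hij hj => ?_, perm_of_count_true_eq (by simp) ?_⟩
  · rw [ha i ⟨hi, by omega⟩, ha j ⟨by omega, hj⟩]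
    simp only [Bool.le_iff_imp, decide_eq_true_eq]
    omega
  · rw [map_congr_left fun j hj => ha j (by simp at hj ⊢; omega), count_true_map_decide_le,
      count_append, min_eq_left]
    exact add_le_add (count_true_map_range'_le x lx) (count_true_map_range'_le y ly)

/-- Correctness of the combine operation of the 4-Odd-Even Merging Network
(1-based indexing: `x 1, ..., x lx` and `y 1, ..., y ly` are the sorted inputs).
Given the out-of-range conventions `X`/`Y` and the definition of `a` by the two simulated
comparator layers, the result `a` is sorted (non-increasing) and is a permutation of the
concatenation of the inputs. -/
theorem stmt10 (k lx ly : ℕ) (x y : ℕ → Bool)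
    (hk : k ≤ lx + ly)
    (hlx : lx ≤ k / 2 + 2) (hly : ly ≤ k / 2)
    (hxs : ∀ i j, 1 ≤ i → i ≤ j → j ≤ lx → x j ≤ x i)
    (hys : ∀ i j, 1 ≤ i → i ≤ j → j ≤ ly → y j ≤ y i)
    (hc1 : ((List.range' 1 ly).map y).count true ≤ ((List.range' 1 lx).map x).count true)
    (hc2 : ((List.range' 1 lx).map x).count true ≤ ((List.range' 1 ly).map y).count true + 4)
    (X Y : ℕ → Bool)
    (hX : ∀ i, X i = if 1 ≤ i ∧ i ≤ lx then x i else false)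
    (hY : ∀ i, Y i = if i < 1 then true else if i ≤ ly then y i else false)
    (a : ℕ → Bool)
    (haeven : ∀ i, 1 ≤ i → 2 * i ≤ lx + ly →
      a (2 * i) = max (max (X (i + 2)) (Y i)) (min (X (i + 1)) (Y (i - 1))))
    (haodd : ∀ i, 1 ≤ i → 2 * i - 1 ≤ lx + ly →
      a (2 * i - 1) = min (max (X (i + 1)) (Y (i - 1))) (min (X i) (Y (i - 2)))) :
    (∀ i j, 1 ≤ i → i ≤ j → j ≤ lx + ly → a j ≤ a i) ∧
    List.Perm ((List.range' 1 (lx + ly)).map a)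
      (((List.range' 1 lx).map x) ++ ((List.range' 1 ly).map y)) :=
  stmt10_general lx ly x y hxs hys hc1 hc2 X Y hX hY a haeven haodd
end

section
/- In any sorted (non-increasing) binary sequence, the number of 1s at odd positions equals the number of 1s at even positions, or exceeds it by exactly one. Consequently, if a and b are formed by merging (sorting) the odd-indexed and even-indexed subsequences respectively of four sorted binary sequences, then |b|₁ ≤ |a|₁ ≤ |b|₁ + 4. -/
/-!
A sorted binary sequence with `c` ones is `1^c 0^m`, so its odd positions carry `⌈c/2⌉` of the
ones and its even positions `⌊c/2⌋`. Each of the four sequences therefore puts as many ones into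
`a` as into `b`, or one more.
-/

/-- Split a list into its odd-indexed elements (1st, 3rd, ...) and its even-indexed
elements (2nd, 4th, ...). -/
def oddsEvens {α : Type*} : List α → List α × List α
  | [] => ([], [])
  | a :: rest =>
    let p := oddsEvens rest
    (a :: p.2, p.1)

theorem count_true_oddsEvens {l : List Bool} (hl : l.Pairwise (fun a b : Bool => b ≤ a)) :
    (oddsEvens l).1.count true = (l.count true + 1) / 2 ∧
      (oddsEvens l).2.count true = l.count true / 2 := by
  induction l with
  | nil => simp [oddsEvens]
  | cons a rest ih =>
    obtain ⟨ha, hrest⟩ := List.pairwise_cons.mp hl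
    obtain ⟨ih₁, ih₂⟩ := ih hrest
    cases a with
    | true =>
      simp only [oddsEvens, List.count_cons_self, ih₁, ih₂, and_true]
      omega
    | false =>
      have h_no_true : rest.count true = 0 :=
        List.count_eq_zero.mpr fun h => absurd (ha true h) (by decide)
      simp [oddsEvens, ih₁, ih₂, h_no_true]

theorem count_true_oddsEvens_snd_le_fst {l : List Bool}
    (hl : l.Pairwise (fun a b : Bool => b ≤ a)) :
    (oddsEvens l).2.count true ≤ (oddsEvens l).1.count true ∧
      (oddsEvens l).1.count true ≤ (oddsEvens l).2.count true + 1 := by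
  obtain ⟨h₁, h₂⟩ := count_true_oddsEvens hl
  omega

/-- (1) In a sorted (non-increasing) binary sequence, the number of 1s at odd positions
equals the number of 1s at even positions or exceeds it by exactly one.
(2) Consequently, if `a` is (a permutation of) the concatenation of the odd subsequences of
four sorted binary sequences and `b` of their even subsequences,
then `|b|₁ ≤ |a|₁ ≤ |b|₁ + 4`. -/
theorem stmt11 :
    (∀ l : List Bool, List.Pairwise (fun a b : Bool => b ≤ a) l →
      (oddsEvens l).1.count true = (oddsEvens l).2.count true ∨
      (oddsEvens l).1.count true = (oddsEvens l).2.count true + 1) ∧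
    (∀ w x y z a b : List Bool,
      List.Pairwise (fun a b : Bool => b ≤ a) w →
      List.Pairwise (fun a b : Bool => b ≤ a) x →
      List.Pairwise (fun a b : Bool => b ≤ a) y →
      List.Pairwise (fun a b : Bool => b ≤ a) z →
      List.Perm a ((oddsEvens w).1 ++ (oddsEvens x).1 ++ (oddsEvens y).1 ++ (oddsEvens z).1) →
      List.Perm b ((oddsEvens w).2 ++ (oddsEvens x).2 ++ (oddsEvens y).2 ++ (oddsEvens z).2) →
      b.count true ≤ a.count true ∧ a.count true ≤ b.count true + 4) := by
  refine ⟨fun l hl => ?_, fun w x y z a b hw hx hy hz ha hb => ?_⟩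
  · have := count_true_oddsEvens_snd_le_fst hl
    omega
  · have := count_true_oddsEvens_snd_le_fst hw
    have := count_true_oddsEvens_snd_le_fst hx
    have := count_true_oddsEvens_snd_le_fst hy
    have := count_true_oddsEvens_snd_le_fst hz
    rw [ha.count_eq, hb.count_eq]
    simp only [List.count_append]
    omega
end

section
/- Define SD(n,k) by SD(n,k) = 0 if k = 0 or k = n, and SD(n,k) = 2^{k−1}k − 2^k + 1 + SD(n−1,k) + SD(n−1,k−1) for 0 < k < n. Let S_{n,k} = Σ_{j=0}^{k} C(n−k+j, j)·2^{k−j}. Then SD(n,k) = C(n,k)·(n+1)/2 − S_{n,k}·(n−2k+1)/2 − 2^k(k−1) − 1. -/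
open Finset

private def G (n k : ℕ) : ℕ := ∑ i ∈ Finset.range (k + 1), n.choose i

private lemma G_succ (n k : ℕ) : G n (k + 1) = G n k + n.choose (k + 1) := by
  unfold G
  rw [Finset.sum_range_succ]

private lemma G_pascal (n k : ℕ) : G (n + 1) (k + 1) = G n (k + 1) + G n k := by
  unfold G
  rw [Finset.sum_range_succ' (fun i => (n + 1).choose i) (k + 1),
      Finset.sum_range_succ' (fun i => n.choose i) (k + 1)]
  simp only [Nat.choose_succ_succ, Nat.choose_zero_right]
  rw [Finset.sum_add_distrib]
  ring

private lemma L1 : ∀ k m : ℕ, k ≤ m →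
    (∑ j ∈ Finset.range (k + 1), (m - k + j).choose j * 2 ^ (k - j)) = G (m + 1) k := by
  intro k
  induction k with
  | zero => intro m _; simp [G]
  | succ k ih =>
    intro m hm
    obtain ⟨m', rfl⟩ : ∃ m', m = m' + 1 := ⟨m - 1, by omega⟩
    have hk : k ≤ m' := by omega
    rw [Finset.sum_range_succ]
    have h1 : ∀ j ∈ Finset.range (k + 1), (m' + 1 - (k + 1) + j).choose j * 2 ^ (k + 1 - j)
        = 2 * ((m' - k + j).choose j * 2 ^ (k - j)) := by
      intro j hj
      simp only [Finset.mem_range] at hj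
      have e1 : m' + 1 - (k + 1) + j = m' - k + j := by omega
      have e2 : k + 1 - j = (k - j) + 1 := by omega
      rw [e1, e2, pow_succ]
      ring
    rw [Finset.sum_congr rfl h1, ← Finset.mul_sum, ih m' hk]
    have e3 : m' + 1 - (k + 1) + (k + 1) = m' + 1 := by omega
    have e4 : k + 1 - (k + 1) = 0 := by omega
    rw [e3, e4, pow_zero, mul_one, G_pascal, G_succ]
    ring

private lemma Gval (n : ℕ) : G (n + 1) n + 1 = 2 ^ (n + 1) := by
  unfold G
  have h := Nat.sum_range_choose (n + 1)
  rw [Finset.sum_range_succ] at h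
  simpa using h

/-- Closed form for the size difference `SD(n,k)` between the Pairwise Selection Network and
the Pairwise Half-Bitonic Selection Network:
`SD(n,k) = C(n,k)·(n+1)/2 − S_{n,k}·(n−2k+1)/2 − 2^k(k−1) − 1`,
where `S_{n,k} = Σ_{j=0}^{k} C(n−k+j, j)·2^{k−j}`. -/
theorem stmt12 (SD : ℕ → ℕ → ℚ)
    (hbase0 : ∀ n, SD n 0 = 0)
    (hbasen : ∀ n, SD n n = 0)
    (hrec : ∀ n k, 0 < k → k < n →
      SD n k = 2 ^ (k - 1) * k - 2 ^ k + 1 + SD (n - 1) k + SD (n - 1) (k - 1))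
    (S : ℕ → ℕ → ℚ)
    (hS : ∀ n k, S n k = ∑ j ∈ Finset.range (k + 1),
      (Nat.choose (n - k + j) j : ℚ) * 2 ^ (k - j))
    (n k : ℕ) (hk : k ≤ n) :
    SD n k = (Nat.choose n k : ℚ) * (n + 1) / 2
      - S n k * ((n : ℚ) - 2 * k + 1) / 2 - 2 ^ k * ((k : ℚ) - 1) - 1 := by
  have hSG : ∀ n k : ℕ, k ≤ n → S n k = (G (n + 1) k : ℚ) := by
    intro n k hkn
    rw [hS, ← L1 k n hkn]
    push_cast
    rfl
  revert hk
  induction n generalizing k with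
  | zero =>
    intro hk
    interval_cases k
    rw [hbase0, hSG 0 0 le_rfl]
    norm_num [G]
  | succ n ih =>
    intro hk
    rcases Nat.eq_zero_or_pos k with rfl | hk0
    · rw [hbase0, hSG (n + 1) 0 (by omega)]
      have hG1 : G (n + 1 + 1) 0 = 1 := by simp [G]
      rw [hG1, Nat.choose_zero_right]
      push_cast
      ring
    rcases eq_or_lt_of_le hk with rfl | hklt
    · rw [hbasen, hSG (n + 1) (n + 1) le_rfl]
      have h2 : ((G (n + 1 + 1) (n + 1) : ℕ) : ℚ) = 2 ^ (n + 2) - 1 := by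
        have := Gval (n + 1)
        have := congrArg (Nat.cast : ℕ → ℚ) this
        push_cast at this
        linarith
      rw [h2, Nat.choose_self]
      push_cast
      ring
    · obtain ⟨k', rfl⟩ : ∃ k', k = k' + 1 := ⟨k - 1, by omega⟩
      have hk'n : k' + 1 ≤ n := by omega
      rw [hrec (n + 1) (k' + 1) (by omega) (by omega)]
      simp only [Nat.add_sub_cancel]
      rw [ih (k' + 1) hk'n, ih k' (by omega)]
      rw [hSG (n + 1) (k' + 1) (by omega), hSG n (k' + 1) hk'n, hSG n k' (by omega)]
      rw [G_pascal (n + 1) k', G_succ (n + 1) k', Nat.choose_succ_succ n k']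
      push_cast
      ring
end

section
/- For natural numbers n > k ≥ 1 both powers of 2, the inequality n − k/2 − n/k ≤ (1/2)·(n − k)·log₂ k holds. -/
/-- For `n = 2^a > k = 2^b ≥ 1` (both powers of two):
`n − k/2 − n/k ≤ (1/2)·(n − k)·log₂ k`. -/
theorem stmt16 (a b : ℕ) (h : b < a) :
    (2 ^ a : ℚ) - 2 ^ b / 2 - 2 ^ a / 2 ^ b ≤
      (1 / 2) * ((2 ^ a : ℚ) - 2 ^ b) * b := by
  have hk : (0:ℚ) < 2 ^ b := by positivity
  have hq : (2:ℚ) ≤ 2 ^ (a - b) := by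
    calc (2:ℚ) = 2 ^ 1 := by norm_num
    _ ≤ 2 ^ (a - b) := by
      apply pow_le_pow_right₀ (by norm_num)
      omega
  have hn : (2:ℚ) ^ a = 2 ^ b * 2 ^ (a - b) := by
    rw [← pow_add]; congr 1; omega
  have hdiv : (2:ℚ) ^ a / 2 ^ b = 2 ^ (a - b) := by
    rw [hn]; field_simp
  rw [hdiv, hn]
  set q : ℚ := 2 ^ (a - b) with hqdef
  match b with
  | 0 => norm_num
  | 1 => norm_num; linarith
  | 2 => norm_num; linarith
  | (m + 3) =>
    have hb3 : (3:ℚ) ≤ ((m + 3 : ℕ) : ℚ) := by push_cast; linarith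
    have hk8 : (8:ℚ) ≤ 2 ^ (m + 3) := by
      calc (8:ℚ) = 2 ^ 3 := by norm_num
      _ ≤ 2 ^ (m + 3) := by apply pow_le_pow_right₀ (by norm_num); omega
    set k : ℚ := 2 ^ (m + 3) with hkdef
    set B : ℚ := ((m + 3 : ℕ) : ℚ) with hBdef
    nlinarith [mul_nonneg (by linarith : (0:ℚ) ≤ B - 3) (by nlinarith : (0:ℚ) ≤ k * q - k),
      mul_nonneg (by linarith : (0:ℚ) ≤ q - 2) (by linarith : (0:ℚ) ≤ k), hq, hk8]
end

section
/- Define the recurrence P(n,k) = P(n−1,k) + P(n−1,k−1) + k·2^{k−1} + 2^{n−1} for 0 < k < n. Then for all m with 0 ≤ m ≤ min(k, n−k): P(n,k) = Σ_{i=0}^{m−1} Σ_{j=0}^{i} C(i,j)·((k−j)·2^{k−j−1} + 2^{n−i−1}) + Σ_{i=0}^{m} C(m,i)·P(n−m, k−i). -/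
open Finset

lemma pascal_sum_aux (f : ℕ → ℕ) (m : ℕ) :
    ∑ i ∈ range (m + 1), Nat.choose m i * (f i + f (i + 1))
      = ∑ i ∈ range (m + 2), Nat.choose (m + 1) i * f i := by
  have h2 : ∑ i ∈ range (m + 1), Nat.choose m i * f i
      = f 0 + ∑ i ∈ range (m + 1), Nat.choose m (i + 1) * f (i + 1) := by
    rw [Finset.sum_range_succ (fun i => Nat.choose m (i + 1) * f (i + 1)) m,
      Nat.choose_succ_self, zero_mul, add_zero,
      Finset.sum_range_succ' (fun i => Nat.choose m i * f i) m]
    simp [add_comm]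
  have h1 : ∑ i ∈ range (m + 2), Nat.choose (m + 1) i * f i
      = f 0 + ∑ i ∈ range (m + 1), Nat.choose (m + 1) (i + 1) * f (i + 1) := by
    rw [Finset.sum_range_succ' (fun i => Nat.choose (m + 1) i * f i) (m + 1)]
    simp [add_comm]
  rw [h1]
  have : ∀ i, Nat.choose (m + 1) (i + 1) * f (i + 1)
      = Nat.choose m i * f (i + 1) + Nat.choose m (i + 1) * f (i + 1) := by
    intro i; rw [Nat.choose_succ_succ, add_mul]
  simp only [this, Finset.sum_add_distrib]
  simp only [mul_add, Finset.sum_add_distrib, h2]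
  ring

/-- Unfolding the recurrence `P(n,k) = P(n−1,k) + P(n−1,k−1) + k·2^{k−1} + 2^{n−1}`
(valid for `0 < k < n`) for `m ≤ min(k, n−k)` levels gives
`P(n,k) = Σ_{i=0}^{m−1} Σ_{j=0}^{i} C(i,j)·((k−j)·2^{k−j−1} + 2^{n−i−1})
        + Σ_{i=0}^{m} C(m,i)·P(n−m, k−i)`. -/
theorem stmt17 (P : ℕ → ℕ → ℕ)
    (hrec : ∀ n k, 0 < k → k < n →
      P n k = P (n - 1) k + P (n - 1) (k - 1) + k * 2 ^ (k - 1) + 2 ^ (n - 1))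
    (n k m : ℕ) (hk : 0 < k) (hkn : k < n) (hm : m ≤ min k (n - k)) :
    P n k = (∑ i ∈ Finset.range m, ∑ j ∈ Finset.range (i + 1),
        Nat.choose i j * ((k - j) * 2 ^ (k - j - 1) + 2 ^ (n - i - 1)))
      + ∑ i ∈ Finset.range (m + 1), Nat.choose m i * P (n - m) (k - i) := by
  induction m with
  | zero => simp
  | succ m ih =>
    have hmk : m + 1 ≤ k := le_trans hm (min_le_left _ _)
    have hmn : m + 1 ≤ n - k := le_trans hm (min_le_right _ _)
    rw [ih (le_trans (Nat.le_succ m) hm)]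
    rw [Finset.sum_range_succ (fun i => ∑ j ∈ Finset.range (i + 1),
      Nat.choose i j * ((k - j) * 2 ^ (k - j - 1) + 2 ^ (n - i - 1))) m]
    rw [add_assoc]
    congr 1
    have hexp : ∀ i ∈ Finset.range (m + 1),
        Nat.choose m i * P (n - m) (k - i)
          = Nat.choose m i * (P (n - m - 1) (k - i) + P (n - m - 1) (k - (i + 1)))
            + Nat.choose m i * ((k - i) * 2 ^ (k - i - 1) + 2 ^ (n - m - 1)) := by
      intro i hi
      rw [Finset.mem_range] at hi
      have hik : i < k := lt_of_lt_of_le hi hmk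
      have h1 : 0 < k - i := Nat.sub_pos_of_lt hik
      have h2 : k - i < n - m := by omega
      rw [hrec (n - m) (k - i) h1 h2,
        show k - (i + 1) = k - i - 1 from by omega,
        show n - m - 1 = n - m - 1 from rfl]
      ring
    rw [Finset.sum_congr rfl hexp, Finset.sum_add_distrib,
      pascal_sum_aux (fun i => P (n - m - 1) (k - i)) m]
    have hsub : n - (m + 1) = n - m - 1 := by omega
    rw [hsub, add_comm]
end

section
/- For natural numbers m and k: Σ_{i=0}^{m−1} Σ_{j=0}^{i} C(i,j)·(k−j)·2^{k−j−1} = 2^k·(3/2)^m·(k + 1 − m/3) − 2^k·(k+1), and Σ_{i=0}^{m−1} Σ_{j=0}^{i} C(i,j)·2^{n−i−1} = m·2^{n−1}. -/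
open Finset

lemma aux_A (i : ℕ) : ∑ j ∈ range (i + 1), (Nat.choose i j : ℚ) / 2 ^ j = (3 / 2) ^ i := by
  have h := add_pow (1/2 : ℚ) 1 i
  simp only [one_pow, mul_one] at h
  rw [show (1/2 : ℚ) + 1 = 3/2 by norm_num] at h
  rw [h]
  refine Finset.sum_congr rfl fun j _ => ?_
  rw [div_pow, one_pow]
  ring

lemma aux_B (i : ℕ) :
    3 * ∑ j ∈ range (i + 1), (Nat.choose i j : ℚ) * j / 2 ^ j = i * (3 / 2) ^ i := by
  induction i with
  | zero => simp
  | succ n ih =>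
    clear ih
    rw [Finset.sum_range_succ']
    push_cast
    have key : ∀ j ∈ range (n + 1),
        (Nat.choose (n+1) (j+1) : ℚ) * (j+1) / 2 ^ (j+1)
          = (n+1) / 2 * ((Nat.choose n j : ℚ) / 2 ^ j) := by
      intro j _
      have h := Nat.add_one_mul_choose_eq n j
      have h' : ((n+1) * Nat.choose n j : ℚ) = (Nat.choose (n+1) (j+1) : ℚ) * (j+1) := by
        exact_mod_cast congrArg (Nat.cast : ℕ → ℚ) h
      rw [← h', pow_succ]
      ring
    rw [Finset.sum_congr rfl key, ← Finset.mul_sum, aux_A]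
    push_cast
    simp only [pow_succ]
    ring

lemma aux_inner (i k : ℕ) :
    ∑ j ∈ range (i + 1), (Nat.choose i j : ℚ) * ((k : ℚ) - j) * 2 ^ k / 2 ^ (j + 1)
      = 2 ^ k / 2 * (3 / 2) ^ i * ((k : ℚ) - (i : ℚ) / 3) := by
  have hA := aux_A i
  have hB := aux_B i
  have : ∑ j ∈ range (i + 1), (Nat.choose i j : ℚ) * ((k : ℚ) - j) * 2 ^ k / 2 ^ (j + 1)
      = (k : ℚ) * 2 ^ k / 2 * ∑ j ∈ range (i + 1), (Nat.choose i j : ℚ) / 2 ^ j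
        - 2 ^ k / 2 * ∑ j ∈ range (i + 1), (Nat.choose i j : ℚ) * j / 2 ^ j := by
    rw [Finset.mul_sum, Finset.mul_sum, ← Finset.sum_sub_distrib]
    refine Finset.sum_congr rfl fun j _ => ?_
    rw [pow_succ]
    ring
  rw [this, hA]
  have hB' : ∑ j ∈ range (i + 1), (Nat.choose i j : ℚ) * j / 2 ^ j = i * (3 / 2) ^ i / 3 := by
    linarith [hB]
  rw [hB']
  ring

/-- Two summation identities (over ℚ; `(k−j)·2^{k−j−1}` is written as
`(k−j)·2^k/2^{j+1}` and `2^{n−i−1}` as `2^n/2^{i+1}`):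
`Σ_{i=0}^{m−1} Σ_{j=0}^{i} C(i,j)·(k−j)·2^{k−j−1} = 2^k·(3/2)^m·(k+1−m/3) − 2^k·(k+1)` and
`Σ_{i=0}^{m−1} Σ_{j=0}^{i} C(i,j)·2^{n−i−1} = m·2^{n−1}`. -/
theorem stmt18 (m k n : ℕ) :
    (∑ i ∈ Finset.range m, ∑ j ∈ Finset.range (i + 1),
        (Nat.choose i j : ℚ) * ((k : ℚ) - j) * 2 ^ k / 2 ^ (j + 1))
      = 2 ^ k * (3 / 2) ^ m * ((k : ℚ) + 1 - m / 3) - 2 ^ k * ((k : ℚ) + 1) ∧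
    (∑ i ∈ Finset.range m, ∑ j ∈ Finset.range (i + 1),
        (Nat.choose i j : ℚ) * 2 ^ n / 2 ^ (i + 1))
      = m * 2 ^ n / 2 := by
  constructor
  · induction m with
    | zero => simp
    | succ p ih =>
      rw [Finset.sum_range_succ, ih, aux_inner]
      push_cast
      simp only [pow_succ]
      ring
  · induction m with
    | zero => simp
    | succ p ih =>
      rw [Finset.sum_range_succ, ih]
      have : ∑ j ∈ Finset.range (p + 1), (Nat.choose p j : ℚ) * 2 ^ n / 2 ^ (p + 1)
          = 2 ^ n / 2 := by
        rw [← Finset.sum_div, ← Finset.sum_mul]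
        rw [show ∑ j ∈ Finset.range (p+1), (Nat.choose p j : ℚ) = 2 ^ p by
          exact_mod_cast congrArg (Nat.cast : ℕ → ℚ) (Nat.sum_range_choose p)]
        rw [pow_succ]
        field_simp
      rw [this]
      push_cast
      ring
end
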